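/- Let φ : [0,∞) → [0,∞) be an N-function of class C¹([0,∞)) ∩ C²((0,∞)) with φ(0) = 0, φ'(0) = 0, φ' increasing and positive on (0,∞), satisfying p ≤ s·φ''(s)/φ'(s) + 1 ≤ q for all s > 0, where 1 < p ≤ q. Define V_φ(Q) := sqrt(φ'(1+|Q|)/(1+|Q|))·Q for Q ∈ ℝ^{N×n}. Then there is a constant c = c(p,q,N,n) ≥ 1 such that for all P, Q ∈ ℝ^{N×n} the three quantities (φ'(1+|P|+|Q|)/(1+|P|+|Q|))·|P−Q|², |V_φ(P) − V_φ(Q)|², and φ_{1+|Q|}(|P−Q|) are pairwise comparable up to the factor c, where φ_{1+|Q|} is the shifted N-function of φ with shift 1+|Q|. -/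

import Mathlib

/-!
Write `G(u) = φ'(u)/u`. The upper index makes `s ↦ φ'(s) s^(1-q)` nonincreasing, so `G` changes
at most by the factor `2^q` between arguments within a factor two of each other, as `1+|P|+|Q|`
is of both `1+|P|` (when `|Q| ≤ |P|`) and `1+|Q|+|P-Q|`. The shifted function `φ_σ(t)` is
comparable to `G(σ+t) t²` since its integrand is monotone.

For `V`, let `g(r) = √G(1+r)` and `ψ(r) = g(r) r`, so that `|V(Q)| = ψ(|Q|)`. The derivative of
`ψ²` lies between `G(1+r) r` and `(q+1) G(1+r) r`, which gives `ψ(a) - ψ(b) ≍ g(a)(a - b)` for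
`0 ≤ b ≤ a`. Split `V(P) - V(Q) = g(|P|)(P - Q) + (g(|P|) - g(|Q|)) Q` with `|Q| ≤ |P|`.
The norm of the second term is `|ψ(|P|) - ψ(|Q|) - g(|P|)(|P| - |Q|)| ≲ g(|P|)(|P| - |Q|)`,
which is at most `g(|P|)|P - Q|` and also `≲ ψ(|P|) - ψ(|Q|) ≤ |V(P) - V(Q)|`; hence
`|V(P) - V(Q)| ≍ g(|P|)|P - Q|`.
-/

open MeasureTheory Real Set Filter
open scoped InnerProductSpace

/-- An N-function `φ` of class `C¹([0,∞)) ∩ C²((0,∞))` with (right) derivative `φ'`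
and second derivative `φ''` on `(0,∞)`, satisfying `φ(0) = 0`, `φ'(0) = 0`, `φ'`
increasing and positive on `(0,∞)`, and the index condition
`p ≤ s·φ''(s)/φ'(s) + 1 ≤ q` for all `s > 0`. -/
structure IsNFun (φ φ' φ'' : ℝ → ℝ) (p q : ℝ) : Prop where
  map_zero : φ 0 = 0
  nonneg : ∀ s : ℝ, 0 ≤ s → 0 ≤ φ s
  hasDeriv : ∀ s ∈ Set.Ici (0:ℝ), HasDerivWithinAt φ (φ' s) (Set.Ici 0) s
  derivCont : ContinuousOn φ' (Set.Ici 0)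
  hasDeriv2 : ∀ s ∈ Set.Ioi (0:ℝ), HasDerivWithinAt φ' (φ'' s) (Set.Ioi 0) s
  deriv2Cont : ContinuousOn φ'' (Set.Ioi 0)
  deriv_zero : φ' 0 = 0
  deriv_mono : MonotoneOn φ' (Set.Ici 0)
  deriv_pos : ∀ s : ℝ, 0 < s → 0 < φ' s
  idx_low : ∀ s : ℝ, 0 < s → p ≤ s * φ'' s / φ' s + 1
  idx_high : ∀ s : ℝ, 0 < s → s * φ'' s / φ' s + 1 ≤ q

/-- The shifted N-function `φ_σ(s) = ∫₀^s φ'(σ+t)·t/(σ+t) dt`, expressed through the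
derivative `φ'` of `φ`. -/
noncomputable def shifted (φ' : ℝ → ℝ) (σ s : ℝ) : ℝ :=
  ∫ t in (0:ℝ)..s, φ' (σ + t) * t / (σ + t)

/-- `V_φ(Q) = sqrt(φ'(1+|Q|)/(1+|Q|))·Q`. -/
noncomputable def Vfun {E : Type*} [NormedAddCommGroup E] [NormedSpace ℝ E]
    (φ' : ℝ → ℝ) (Q : E) : E :=
  Real.sqrt (φ' (1 + ‖Q‖) / (1 + ‖Q‖)) • Q

/-- Two nonnegative quantities are comparable up to the factor `c`. -/
def Comp (c x y : ℝ) : Prop := x ≤ c * y ∧ y ≤ c * x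

namespace Comp

variable {c d x y z : ℝ}

theorem symm (hxy : Comp c x y) : Comp c y x := ⟨hxy.2, hxy.1⟩

theorem trans (hxy : Comp c x y) (hyz : Comp d y z) (hc : 0 ≤ c) (hd : 0 ≤ d) :
    Comp (c * d) x z := by
  constructor
  · nlinarith [mul_le_mul_of_nonneg_left hyz.1 hc, hxy.1]
  · nlinarith [mul_le_mul_of_nonneg_left hxy.2 hd, hyz.2]

theorem mono (hxy : Comp c x y) (hcd : c ≤ d) (hx : 0 ≤ x) (hy : 0 ≤ y) : Comp d x y :=
  ⟨hxy.1.trans (mul_le_mul_of_nonneg_right hcd hy),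
    hxy.2.trans (mul_le_mul_of_nonneg_right hcd hx)⟩

theorem mul_right (hxy : Comp c x y) (hz : 0 ≤ z) : Comp c (x * z) (y * z) := by
  constructor
  · nlinarith [mul_le_mul_of_nonneg_right hxy.1 hz]
  · nlinarith [mul_le_mul_of_nonneg_right hxy.2 hz]

theorem sq (hxy : Comp c x y) (hx : 0 ≤ x) (hy : 0 ≤ y) : Comp (c ^ 2) (x ^ 2) (y ^ 2) := by
  constructor
  · simpa [mul_pow] using pow_le_pow_left₀ hx hxy.1 2
  · simpa [mul_pow] using pow_le_pow_left₀ hy hxy.2 2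

/-- From `x² - y² = (x - y)(x + y)` with `x ≤ x + y ≤ 2x`. -/
theorem of_sq_sub_sq {w : ℝ} (hc : 0 ≤ c) (hx : 0 < x) (hy : 0 ≤ y) (hyx : y ≤ x)
    (h : Comp c (x ^ 2 - y ^ 2) (w * x)) : Comp (2 * c) (x - y) w := by
  obtain ⟨h₁, h₂⟩ := h
  have hcw : 0 ≤ c * w := by nlinarith
  constructor
  · nlinarith
  · nlinarith [mul_le_mul_of_nonneg_left (by linarith : x + y ≤ 2 * x)
      (mul_nonneg hc (sub_nonneg.2 hyx))]

end Comp

theorem mul_sub_le_sub_le_mul_sub_of_hasDerivAt {f : ℝ → ℝ} {a b m M : ℝ} (hab : a ≤ b)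
    (hf : ∀ x ∈ Icc a b, ∃ f', HasDerivAt f f' x ∧ m ≤ f' ∧ f' ≤ M) :
    m * (b - a) ≤ f b - f a ∧ f b - f a ≤ M * (b - a) := by
  choose f' hf' hm hM using hf
  have hcont : ContinuousOn f (Icc a b) := fun x hx =>
    (hf' x hx).continuousAt.continuousWithinAt
  have hdiff : DifferentiableOn ℝ f (interior (Icc a b)) := fun x hx =>
    (hf' x (interior_subset hx)).differentiableAt.differentiableWithinAt
  have ha : a ∈ Icc a b := left_mem_Icc.2 hab
  have hb : b ∈ Icc a b := right_mem_Icc.2 hab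
  exact ⟨(convex_Icc a b).mul_sub_le_image_sub_of_le_deriv hcont hdiff
      (fun x hx => (hf' x _).deriv ▸ hm x (interior_subset hx)) a ha b hb hab,
    (convex_Icc a b).image_sub_le_mul_sub_of_deriv_le hcont hdiff
      (fun x hx => (hf' x _).deriv ▸ hM x (interior_subset hx)) a ha b hb hab⟩

/-- `‖V_φ(Q)‖² = vNormSq φ' ‖Q‖`. -/
noncomputable def vNormSq (φ' : ℝ → ℝ) (r : ℝ) : ℝ := φ' (1 + r) / (1 + r) * r ^ 2

noncomputable def vCoeff (φ' : ℝ → ℝ) (r : ℝ) : ℝ := √(φ' (1 + r) / (1 + r))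

section Vfun

theorem vCoeff_nonneg (φ' : ℝ → ℝ) (r : ℝ) : 0 ≤ vCoeff φ' r := Real.sqrt_nonneg _

variable {E : Type*} [NormedAddCommGroup E] [NormedSpace ℝ E] {φ' : ℝ → ℝ}

theorem Vfun_eq_vCoeff_smul (Q : E) : Vfun φ' Q = vCoeff φ' ‖Q‖ • Q := rfl

theorem comp_norm_Vfun_sub {C : ℝ} (hC : 1 ≤ C)
    (hψ : ∀ a b : ℝ, 0 ≤ b → b ≤ a →
      Comp C (vCoeff φ' a * a - vCoeff φ' b * b) (vCoeff φ' a * (a - b)))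
    {P Q : E} (hQP : ‖Q‖ ≤ ‖P‖) :
    Comp (1 + C ^ 2) (vCoeff φ' ‖P‖ * ‖P - Q‖) ‖Vfun φ' P - Vfun φ' Q‖ := by
  set ga := vCoeff φ' ‖P‖
  set gb := vCoeff φ' ‖Q‖
  have hga : 0 ≤ ga := vCoeff_nonneg φ' _
  have hnorm : ∀ R : E, ‖Vfun φ' R‖ = vCoeff φ' ‖R‖ * ‖R‖ := fun R => by
    rw [Vfun_eq_vCoeff_smul, norm_smul, Real.norm_of_nonneg (vCoeff_nonneg φ' _)]
  have hdecomp : Vfun φ' P - Vfun φ' Q = ga • (P - Q) + (ga - gb) • Q := by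
    rw [Vfun_eq_vCoeff_smul, Vfun_eq_vCoeff_smul, smul_sub, sub_smul]
    abel
  obtain ⟨hψ₁, hψ₂⟩ := hψ ‖P‖ ‖Q‖ (norm_nonneg Q) hQP
  have hcross : ‖(ga - gb) • Q‖ ≤ C * (ga * (‖P‖ - ‖Q‖)) := by
    have hy : 0 ≤ ga * (‖P‖ - ‖Q‖) := mul_nonneg hga (by linarith)
    rw [norm_smul, Real.norm_eq_abs, ← abs_of_nonneg (norm_nonneg Q), ← abs_mul,
      abs_of_nonneg (norm_nonneg Q), abs_le]
    constructor <;> nlinarith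
  have hPQ : ‖P‖ - ‖Q‖ ≤ ‖P - Q‖ := norm_sub_norm_le P Q
  have hrad : ga * ‖P‖ - gb * ‖Q‖ ≤ ‖Vfun φ' P - Vfun φ' Q‖ := by
    rw [← hnorm, ← hnorm]
    exact norm_sub_norm_le _ _
  have hsmul : ‖ga • (P - Q)‖ = ga * ‖P - Q‖ := by
    rw [norm_smul, Real.norm_of_nonneg hga]
  have hupper : ‖Vfun φ' P - Vfun φ' Q‖ ≤ ga * ‖P - Q‖ + ‖(ga - gb) • Q‖ := by
    rw [hdecomp, ← hsmul]
    exact norm_add_le _ _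
  have hlower : ga * ‖P - Q‖ ≤ ‖Vfun φ' P - Vfun φ' Q‖ + ‖(ga - gb) • Q‖ := by
    rw [hdecomp, ← hsmul]
    exact norm_le_add_norm_add _ _
  constructor
  · nlinarith [mul_le_mul_of_nonneg_left hψ₂ (by linarith : 0 ≤ C)]
  · nlinarith [mul_le_mul_of_nonneg_left hPQ hga,
      mul_le_mul_of_nonneg_left (mul_le_mul_of_nonneg_left hPQ hga) (by linarith : 0 ≤ C),
      mul_nonneg (mul_nonneg hga (norm_nonneg (P - Q))) (by nlinarith : 0 ≤ C ^ 2 - C)]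

end Vfun

namespace IsNFun

variable {φ φ' φ'' : ℝ → ℝ} {p q : ℝ}

theorem deriv_nonneg (h : IsNFun φ φ' φ'' p q) {s : ℝ} (hs : 0 ≤ s) : 0 ≤ φ' s :=
  h.deriv_zero ▸ h.deriv_mono self_mem_Ici hs hs

theorem hasDerivAt_deriv (h : IsNFun φ φ' φ'' p q) {s : ℝ} (hs : 0 < s) :
    HasDerivAt φ' (φ'' s) s :=
  (h.hasDeriv2 s hs).hasDerivAt (Ioi_mem_nhds hs)

theorem deriv2_nonneg (h : IsNFun φ φ' φ'' p q) {s : ℝ} (hs : 0 < s) : 0 ≤ φ'' s :=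
  (h.hasDerivAt_deriv hs).hasDerivWithinAt.nonneg_of_monotoneOn
    (by simpa using PerfectSpace.univ_preperfect.open_inter isOpen_Ioi s ⟨hs, trivial⟩)
    (h.deriv_mono.mono Ioi_subset_Ici_self)

theorem mul_deriv2_le (h : IsNFun φ φ' φ'' p q) {s : ℝ} (hs : 0 < s) :
    s * φ'' s ≤ (q - 1) * φ' s := by
  have := h.idx_high s hs
  rw [← le_sub_iff_add_le, div_le_iff₀ (h.deriv_pos s hs)] at this
  linarith

theorem one_le_q (h : IsNFun φ φ' φ'' p q) : 1 ≤ q := by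
  have := h.mul_deriv2_le one_pos
  nlinarith [h.deriv2_nonneg one_pos, h.deriv_pos 1 one_pos]

/-- The upper index makes `s ↦ φ'(s) s^(1-q)` nonincreasing. -/
theorem deriv_le_rpow_mul (h : IsNFun φ φ' φ'' p q) {u v : ℝ} (hu : 0 < u) (huv : u ≤ v) :
    φ' v ≤ (v / u) ^ (q - 1) * φ' u := by
  have hv : 0 < v := hu.trans_le huv
  have hF : ∀ s ∈ Icc u v, HasDerivAt (fun s => φ' s * s ^ (1 - q))
      (s ^ (1 - q - 1) * (s * φ'' s - (q - 1) * φ' s)) s := by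
    intro s hs
    have hs0 : 0 < s := hu.trans_le hs.1
    refine ((h.hasDerivAt_deriv hs0).mul (Real.hasDerivAt_rpow_const (p := 1 - q)
      (Or.inl hs0.ne'))).congr_deriv ?_
    rw [Real.rpow_sub_one hs0.ne']
    field_simp
    ring
  have hanti : AntitoneOn (fun s => φ' s * s ^ (1 - q)) (Icc u v) :=
    antitoneOn_of_hasDerivWithinAt_nonpos (convex_Icc u v)
      (fun s hs => (hF s hs).continuousAt.continuousWithinAt)
      (fun s hs => (hF s (interior_subset hs)).hasDerivWithinAt)
      (fun s hs => by
        have hs0 : 0 < s := hu.trans_le (interior_subset hs).1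
        exact mul_nonpos_of_nonneg_of_nonpos (by positivity)
          (by linarith [h.mul_deriv2_le hs0]))
  have hFuv : φ' v * v ^ (1 - q) ≤ φ' u * u ^ (1 - q) :=
    hanti ⟨le_rfl, huv⟩ ⟨huv, le_rfl⟩ huv
  have hv1 : v ^ (1 - q) * v ^ (q - 1) = 1 := by rw [← Real.rpow_add hv]; simp
  have hu1 : u ^ (1 - q) * u ^ (q - 1) = 1 := by rw [← Real.rpow_add hu]; simp
  rw [Real.div_rpow hv.le hu.le]
  calc φ' v = φ' v * v ^ (1 - q) * v ^ (q - 1) := by rw [mul_assoc, hv1, mul_one]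
    _ ≤ φ' u * u ^ (1 - q) * v ^ (q - 1) := mul_le_mul_of_nonneg_right hFuv (by positivity)
    _ = v ^ (q - 1) / u ^ (q - 1) * φ' u := by
      rw [eq_inv_of_mul_eq_one_left hu1]
      ring

theorem deriv_le_two_rpow_mul (h : IsNFun φ φ' φ'' p q) {u v : ℝ} (hu : 0 < u) (huv : u ≤ v)
    (hv : v ≤ 2 * u) : φ' v ≤ 2 ^ (q - 1) * φ' u :=
  (h.deriv_le_rpow_mul hu huv).trans <| mul_le_mul_of_nonneg_right
    (Real.rpow_le_rpow (div_nonneg (hu.le.trans huv) hu.le) ((div_le_iff₀ hu).2 hv)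
      (sub_nonneg.2 h.one_le_q))
    (h.deriv_nonneg hu.le)

theorem comp_div_div (h : IsNFun φ φ' φ'' p q) {u v : ℝ} (hu : 0 < u) (hvu : v ≤ 2 * u)
    (huv : u ≤ 2 * v) : Comp (2 ^ q) (φ' u / u) (φ' v / v) := by
  wlog huv' : u ≤ v generalizing u v
  · exact (this (by linarith) huv hvu (by linarith)).symm
  have hv : 0 < v := hu.trans_le huv'
  have hq : (2 : ℝ) ^ q = 2 ^ (q - 1) * 2 := by
    rw [← Real.rpow_add_one two_ne_zero]; ring_nf
  have h2q : 1 ≤ (2 : ℝ) ^ (q - 1) := Real.one_le_rpow one_le_two (sub_nonneg.2 h.one_le_q)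
  have hgu : 0 ≤ φ' u / u := div_nonneg (h.deriv_nonneg hu.le) hu.le
  have hgv : 0 ≤ φ' v / v := div_nonneg (h.deriv_nonneg hv.le) hv.le
  rw [hq]
  constructor
  · rw [div_le_iff₀ hu]
    calc φ' u ≤ φ' v := h.deriv_mono hu.le hv.le huv'
      _ = φ' v / v * v := (div_mul_cancel₀ _ hv.ne').symm
      _ ≤ 2 ^ (q - 1) * 2 * (φ' v / v) * u := by
        nlinarith [mul_le_mul_of_nonneg_left hvu hgv, mul_nonneg hgv hu.le]
  · rw [div_le_iff₀ hv]
    calc φ' v ≤ 2 ^ (q - 1) * φ' u := h.deriv_le_two_rpow_mul hu huv' hvu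
      _ = 2 ^ (q - 1) * (φ' u / u * u) := by rw [div_mul_cancel₀ _ hu.ne']
      _ ≤ 2 ^ (q - 1) * 2 * (φ' u / u) * v := by
        nlinarith [mul_le_mul_of_nonneg_left (by linarith : u ≤ 2 * v)
          (mul_nonneg (by linarith : (0 : ℝ) ≤ 2 ^ (q - 1)) hgu)]

theorem monotoneOn_shifted_integrand (h : IsNFun φ φ' φ'' p q) {σ : ℝ} (hσ : 0 < σ) :
    MonotoneOn (fun t => φ' (σ + t) * t / (σ + t)) (Ici 0) := by
  intro s (hs : 0 ≤ s) t (ht : 0 ≤ t) hst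
  simp only [mul_div_assoc]
  refine mul_le_mul (h.deriv_mono (by simp; linarith) (by simp; linarith) (by linarith)) ?_
    (by positivity) (h.deriv_nonneg (by linarith))
  rw [div_le_div_iff₀ (by linarith) (by linarith)]
  nlinarith

theorem shifted_nonneg (h : IsNFun φ φ' φ'' p q) {σ t : ℝ} (hσ : 0 < σ) (ht : 0 ≤ t) :
    0 ≤ shifted φ' σ t :=
  intervalIntegral.integral_nonneg ht fun τ hτ =>
    div_nonneg (mul_nonneg (h.deriv_nonneg (by linarith [hτ.1])) hτ.1) (by linarith [hτ.1])

/-- The integrand is monotone, and on `[t/2, t]` it is at least its value at `t/2`, which is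
comparable to its value at `t` by the upper index. -/
theorem comp_shifted (h : IsNFun φ φ' φ'' p q) {σ t : ℝ} (hσ : 0 < σ) (ht : 0 ≤ t) :
    Comp (2 ^ (q + 1)) (shifted φ' σ t) (φ' (σ + t) / (σ + t) * t ^ 2) := by
  set f := fun τ => φ' (σ + τ) * τ / (σ + τ) with hf
  have hmono : MonotoneOn f (Ici 0) := h.monotoneOn_shifted_integrand hσ
  have hint : ∀ a b : ℝ, 0 ≤ a → a ≤ b → IntervalIntegrable f volume a b :=
    fun a b ha hab => (hmono.mono fun x hx => ha.trans (uIcc_of_le hab ▸ hx).1).intervalIntegrable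
  have h2q : 1 ≤ (2 : ℝ) ^ (q + 1) := Real.one_le_rpow one_le_two (by linarith [h.one_le_q])
  have hG : 0 ≤ φ' (σ + t) / (σ + t) * t ^ 2 :=
    mul_nonneg (div_nonneg (h.deriv_nonneg (by linarith)) (by linarith)) (sq_nonneg t)
  have hupper : shifted φ' σ t ≤ φ' (σ + t) / (σ + t) * t ^ 2 := by
    calc shifted φ' σ t ≤ ∫ _ in (0 : ℝ)..t, f t :=
          intervalIntegral.integral_mono_on ht (hint 0 t le_rfl ht) intervalIntegrable_const
            fun τ hτ => hmono hτ.1 ht hτ.2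
      _ = φ' (σ + t) / (σ + t) * t ^ 2 := by
        rw [intervalIntegral.integral_const, smul_eq_mul, hf]
        ring
  have hhalf : t / 2 * f (t / 2) ≤ shifted φ' σ t := by
    calc t / 2 * f (t / 2) = ∫ _ in (t / 2)..t, f (t / 2) := by
          rw [intervalIntegral.integral_const, smul_eq_mul]
          ring
      _ ≤ ∫ τ in (t / 2)..t, f τ :=
          intervalIntegral.integral_mono_on (by linarith) intervalIntegrable_const
            (hint _ _ (by linarith) (by linarith))
            fun τ hτ => hmono (by simp; linarith) (by simp; linarith [hτ.1]) hτ.1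
      _ ≤ shifted φ' σ t :=
          intervalIntegral.integral_mono_interval (by linarith) (by linarith) le_rfl
            (ae_restrict_of_forall_mem measurableSet_Ioc fun τ hτ =>
              div_nonneg (mul_nonneg (h.deriv_nonneg (by linarith [hτ.1])) hτ.1.le)
                (by linarith [hτ.1])) (hint 0 t le_rfl ht)
  have hlower : φ' (σ + t) / (σ + t) * t ^ 2 ≤ 2 ^ (q + 1) * (t / 2 * f (t / 2)) := by
    have hq : (2 : ℝ) ^ (q + 1) = 2 ^ (q - 1) * 4 := by
      rw [show q + 1 = (q - 1) + 1 + 1 by ring, Real.rpow_add_one two_ne_zero,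
        Real.rpow_add_one two_ne_zero]
      ring
    have hratio : φ' (σ + t) ≤ 2 ^ (q - 1) * φ' (σ + t / 2) :=
      h.deriv_le_two_rpow_mul (by linarith) (by linarith) (by linarith)
    calc φ' (σ + t) / (σ + t) * t ^ 2
        ≤ 2 ^ (q - 1) * φ' (σ + t / 2) / (σ + t / 2) * t ^ 2 := by
          gcongr
          · have := h.deriv_nonneg (s := σ + t / 2) (by linarith)
            positivity
          · linarith
      _ = 2 ^ (q + 1) * (t / 2 * f (t / 2)) := by
          rw [hq, hf]
          field_simp
          ring
  exact ⟨hupper.trans (le_mul_of_one_le_left hG h2q),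
    hlower.trans (mul_le_mul_of_nonneg_left hhalf (by linarith))⟩

theorem comp_shifted_of_triangle (h : IsNFun φ φ' φ'' p q) {a b t : ℝ} (ha : 0 ≤ a)
    (hb : 0 ≤ b) (ht : 0 ≤ t) (hat : a ≤ b + t) (hta : t ≤ a + b) :
    Comp (2 ^ q * 2 ^ (q + 1)) (φ' (1 + a + b) / (1 + a + b) * t ^ 2)
      (shifted φ' (1 + b) t) :=
  ((h.comp_div_div (by linarith) (by linarith) (by linarith)).mul_right (sq_nonneg t)).trans
    (h.comp_shifted (by linarith) ht).symm (by positivity) (by positivity)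

theorem exists_hasDerivAt_vNormSq (h : IsNFun φ φ' φ'' p q) {r : ℝ} (hr : 0 ≤ r) :
    ∃ d, HasDerivAt (vNormSq φ') d r ∧ φ' (1 + r) / (1 + r) * r ≤ d ∧
      d ≤ (q + 1) * (φ' (1 + r) / (1 + r) * r) := by
  have hu : 0 < 1 + r := by linarith
  have hφ' : HasDerivAt (fun r => φ' (1 + r)) (φ'' (1 + r)) r :=
    HasDerivAt.comp_const_add 1 r (h.hasDerivAt_deriv hu)
  have hφ := h.deriv_nonneg hu.le
  have hφr : 0 ≤ φ' (1 + r) * r := mul_nonneg hφ hr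
  refine ⟨(φ'' (1 + r) * (1 + r) * r ^ 2 + φ' (1 + r) * r * (2 + r)) / (1 + r) ^ 2,
    ((hφ'.div ((hasDerivAt_id r).const_add 1) hu.ne').mul (hasDerivAt_pow 2 r)).congr_deriv
      (by simp only [Pi.div_apply, id]; field_simp; ring), ?_, ?_⟩
  · rw [le_div_iff₀ (by positivity),
      show φ' (1 + r) / (1 + r) * r * (1 + r) ^ 2 = φ' (1 + r) * r * (1 + r) by field_simp]
    nlinarith [mul_nonneg (mul_nonneg (h.deriv2_nonneg hu) hu.le) (sq_nonneg r)]
  · rw [div_le_iff₀ (by positivity),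
      show (q + 1) * (φ' (1 + r) / (1 + r) * r) * (1 + r) ^ 2
        = (q + 1) * (φ' (1 + r) * r) * (1 + r) by field_simp]
    have hq := h.one_le_q
    nlinarith [mul_le_mul_of_nonneg_right (h.mul_deriv2_le hu) (sq_nonneg r),
      mul_nonneg (mul_nonneg (sub_nonneg.2 hq) hφr) hr]

/-- On `[b, a] ⊆ [a/2, a]` the derivative of `vNormSq` is comparable to `φ'(1+a)/(1+a)·a`. -/
theorem comp_vNormSq_sub (h : IsNFun φ φ' φ'' p q) {a b : ℝ} (hb : 0 ≤ b) (hba : b ≤ a)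
    (hab : a ≤ 2 * b) :
    Comp ((q + 1) * 2 ^ (q + 1)) (vNormSq φ' a - vNormSq φ' b)
      (φ' (1 + a) / (1 + a) * a * (a - b)) := by
  have hq := h.one_le_q
  have h2q : 0 < (2 : ℝ) ^ q := Real.rpow_pos_of_pos two_pos q
  rw [Real.rpow_add_one two_ne_zero q]
  set G := φ' (1 + a) / (1 + a) * a
  have hG : 0 ≤ G := mul_nonneg (div_nonneg (h.deriv_nonneg (by linarith)) (by linarith))
    (by linarith)
  obtain ⟨hlow, hupp⟩ := mul_sub_le_sub_le_mul_sub_of_hasDerivAt (f := vNormSq φ')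
    (m := G / (2 ^ q * 2)) (M := (q + 1) * 2 ^ q * G) hba fun r hr => by
      have hr0 : 0 ≤ r := hb.trans hr.1
      obtain ⟨d, hd, hdl, hdu⟩ := h.exists_hasDerivAt_vNormSq hr0
      obtain ⟨hra, har⟩ := h.comp_div_div (u := 1 + r) (v := 1 + a) (by linarith)
        (by linarith [hr.1]) (by linarith [hr.2])
      have hgr : 0 ≤ φ' (1 + r) / (1 + r) := div_nonneg (h.deriv_nonneg (by linarith))
        (by linarith)
      have hga : 0 ≤ φ' (1 + a) / (1 + a) := div_nonneg (h.deriv_nonneg (by linarith))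
        (by linarith)
      refine ⟨d, hd, ?_, ?_⟩
      · rw [div_le_iff₀ (by positivity)]
        nlinarith [mul_le_mul har (by linarith [hr.1] : a ≤ 2 * r) (by linarith)
          (mul_nonneg h2q.le hgr), mul_le_mul_of_nonneg_left hdl h2q.le]
      · nlinarith [mul_le_mul hra hr.2 hr0 (mul_nonneg h2q.le hga)]
  have hHab : 0 ≤ vNormSq φ' a - vNormSq φ' b :=
    (mul_nonneg (by positivity) (by linarith)).trans hlow
  rw [div_mul_eq_mul_div, div_le_iff₀ (by positivity)] at hlow
  constructor
  · nlinarith [mul_nonneg (mul_nonneg (by linarith : (0 : ℝ) ≤ q + 1) h2q.le)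
      (mul_nonneg hG (by linarith : 0 ≤ a - b))]
  · nlinarith [mul_nonneg (mul_nonneg (by linarith : (0 : ℝ) ≤ q) h2q.le) hHab]

theorem sq_vCoeff (h : IsNFun φ φ' φ'' p q) {r : ℝ} (hr : 0 ≤ r) :
    vCoeff φ' r ^ 2 = φ' (1 + r) / (1 + r) :=
  Real.sq_sqrt (div_nonneg (h.deriv_nonneg (by linarith)) (by linarith))

theorem vCoeff_pos (h : IsNFun φ φ' φ'' p q) {r : ℝ} (hr : 0 ≤ r) : 0 < vCoeff φ' r :=
  Real.sqrt_pos.2 (div_pos (h.deriv_pos _ (by linarith)) (by linarith))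

theorem vCoeff_mul_self_le (h : IsNFun φ φ' φ'' p q) {a b : ℝ} (hb : 0 ≤ b) (hba : b ≤ a) :
    vCoeff φ' b * b ≤ vCoeff φ' a * a := by
  have ha : 0 ≤ a := hb.trans hba
  rw [← pow_le_pow_iff_left₀ (mul_nonneg (vCoeff_nonneg φ' b) hb)
    (mul_nonneg (vCoeff_nonneg φ' a) ha) two_ne_zero, mul_pow, mul_pow, h.sq_vCoeff hb,
    h.sq_vCoeff ha, div_mul_eq_mul_div, div_mul_eq_mul_div,
    div_le_div_iff₀ (by linarith) (by linarith)]
  have hsq : b ^ 2 * (1 + a) ≤ a ^ 2 * (1 + b) := by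
    nlinarith [mul_nonneg (sub_nonneg.2 hba) (by positivity : (0 : ℝ) ≤ a + b + a * b)]
  nlinarith [mul_le_mul_of_nonneg_right (h.deriv_mono (by simp; linarith)
      (by simp; linarith) (by linarith) : φ' (1 + b) ≤ φ' (1 + a))
      (by positivity : 0 ≤ b ^ 2 * (1 + a)),
    mul_le_mul_of_nonneg_left hsq (h.deriv_nonneg (by linarith : (0 : ℝ) ≤ 1 + a))]

theorem comp_vCoeff_mul_sub_of_le_two_mul (h : IsNFun φ φ' φ'' p q) {a b : ℝ} (hb : 0 ≤ b)
    (hba : b ≤ a) (hab : a ≤ 2 * b) :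
    Comp (2 * ((q + 1) * 2 ^ (q + 1))) (vCoeff φ' a * a - vCoeff φ' b * b)
      (vCoeff φ' a * (a - b)) := by
  rcases (hb.trans hba).eq_or_lt with ha | ha
  · obtain rfl : b = 0 := le_antisymm (ha ▸ hba) hb
    subst ha
    simp [Comp]
  refine Comp.of_sq_sub_sq
    (mul_nonneg (by linarith [h.one_le_q]) (Real.rpow_pos_of_pos two_pos (q + 1)).le)
    (mul_pos (h.vCoeff_pos ha.le) ha) (mul_nonneg (vCoeff_nonneg φ' _) hb)
    (h.vCoeff_mul_self_le hb hba) ?_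
  convert h.comp_vNormSq_sub hb hba hab using 1
  · rw [mul_pow, mul_pow, h.sq_vCoeff hb, h.sq_vCoeff ha.le, vNormSq, vNormSq]
  · rw [show vCoeff φ' a * (a - b) * (vCoeff φ' a * a) = vCoeff φ' a ^ 2 * a * (a - b) by ring,
      h.sq_vCoeff ha.le]

/-- For `a > 2b` this reduces to the case `b = a/2`, by monotonicity of `r ↦ vCoeff φ' r * r`. -/
theorem comp_vCoeff_mul_sub (h : IsNFun φ φ' φ'' p q) {a b : ℝ} (hb : 0 ≤ b)
    (hba : b ≤ a) :
    Comp (4 * ((q + 1) * 2 ^ (q + 1))) (vCoeff φ' a * a - vCoeff φ' b * b)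
      (vCoeff φ' a * (a - b)) := by
  have hc : 1 ≤ (q + 1) * 2 ^ (q + 1) := one_le_mul_of_one_le_of_one_le
    (by linarith [h.one_le_q]) (Real.one_le_rpow one_le_two (by linarith [h.one_le_q]))
  have hga := h.vCoeff_pos (hb.trans hba)
  by_cases hab : a ≤ 2 * b
  · exact (h.comp_vCoeff_mul_sub_of_le_two_mul hb hba hab).mono (by linarith)
      (by linarith [h.vCoeff_mul_self_le hb hba]) (mul_nonneg hga.le (by linarith))
  replace hab := not_le.1 hab
  obtain ⟨-, hhalf⟩ := h.comp_vCoeff_mul_sub_of_le_two_mul (a := a) (b := a / 2)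
    (by linarith) (by linarith) (by linarith)
  have hψb : vCoeff φ' b * b ≤ vCoeff φ' (a / 2) * (a / 2) :=
    h.vCoeff_mul_self_le hb (by linarith)
  have hψb0 : 0 ≤ vCoeff φ' b * b := mul_nonneg (vCoeff_nonneg φ' _) hb
  constructor
  · nlinarith [mul_le_mul_of_nonneg_left (by linarith : a ≤ 2 * (a - b)) hga.le,
      mul_nonneg (mul_nonneg hga.le (by linarith : 0 ≤ a - b))
        (by linarith : 0 ≤ 4 * ((q + 1) * 2 ^ (q + 1)) - 2)]
  · nlinarith [mul_le_mul_of_nonneg_left hb hga.le,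
      mul_le_mul_of_nonneg_left hψb (by linarith : (0 : ℝ) ≤ (q + 1) * 2 ^ (q + 1))]

theorem comp_sq_norm_Vfun_sub {E : Type*} [NormedAddCommGroup E] [NormedSpace ℝ E]
    (h : IsNFun φ φ' φ'' p q) {C : ℝ} (hC : 1 ≤ C)
    (hψ : ∀ a b : ℝ, 0 ≤ b → b ≤ a →
      Comp C (vCoeff φ' a * a - vCoeff φ' b * b) (vCoeff φ' a * (a - b)))
    (P Q : E) :
    Comp (2 ^ q * (1 + C ^ 2) ^ 2)
      (φ' (1 + ‖P‖ + ‖Q‖) / (1 + ‖P‖ + ‖Q‖) * ‖P - Q‖ ^ 2)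
      (‖Vfun φ' P - Vfun φ' Q‖ ^ 2) := by
  wlog hQP : ‖Q‖ ≤ ‖P‖ generalizing P Q
  · have := this Q P (le_of_not_ge hQP)
    rwa [add_right_comm, norm_sub_rev Q, norm_sub_rev (Vfun φ' Q)] at this
  have hG := h.comp_div_div (u := 1 + ‖P‖ + ‖Q‖) (v := 1 + ‖P‖) (by positivity)
    (by linarith [norm_nonneg Q]) (by linarith [norm_nonneg P])
  have hV := (comp_norm_Vfun_sub hC hψ hQP).sq
    (mul_nonneg (vCoeff_nonneg φ' _) (norm_nonneg _)) (norm_nonneg _)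
  rw [mul_pow, h.sq_vCoeff (norm_nonneg P)] at hV
  exact (hG.mul_right (sq_nonneg _)).trans hV (by positivity) (by positivity)

end IsNFun

theorem V_equivalences_general (N n : ℕ) (p q : ℝ) (φ φ' φ'' : ℝ → ℝ)
    (h : IsNFun φ φ' φ'' p q) :
    ∃ c : ℝ, 1 ≤ c ∧ ∀ P Q : EuclideanSpace ℝ (Fin N × Fin n),
      Comp c (φ' (1 + ‖P‖ + ‖Q‖) / (1 + ‖P‖ + ‖Q‖) * ‖P - Q‖ ^ 2)
        (‖Vfun φ' P - Vfun φ' Q‖ ^ 2) ∧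
      Comp c (‖Vfun φ' P - Vfun φ' Q‖ ^ 2) (shifted φ' (1 + ‖Q‖) ‖P - Q‖) ∧
      Comp c (φ' (1 + ‖P‖ + ‖Q‖) / (1 + ‖P‖ + ‖Q‖) * ‖P - Q‖ ^ 2)
        (shifted φ' (1 + ‖Q‖) ‖P - Q‖) := by
  have hq := h.one_le_q
  have h2q : 1 ≤ (2 : ℝ) ^ q := Real.one_le_rpow one_le_two (by linarith)
  have h2q' : 1 ≤ (2 : ℝ) ^ (q + 1) := Real.one_le_rpow one_le_two (by linarith)
  set C := 4 * ((q + 1) * 2 ^ (q + 1))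
  have hC : 1 ≤ C := by nlinarith
  have hcV : 1 ≤ 2 ^ q * (1 + C ^ 2) ^ 2 := one_le_mul_of_one_le_of_one_le h2q (by nlinarith)
  have hcS : 1 ≤ (2 : ℝ) ^ q * 2 ^ (q + 1) := one_le_mul_of_one_le_of_one_le h2q h2q'
  refine ⟨_, one_le_mul_of_one_le_of_one_le hcV hcS, fun P Q => ?_⟩
  have hV := h.comp_sq_norm_Vfun_sub hC (fun a b hb hba => h.comp_vCoeff_mul_sub hb hba) P Q
  have hS := h.comp_shifted_of_triangle (norm_nonneg P) (norm_nonneg Q) (norm_nonneg (P - Q))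
    (norm_le_norm_add_norm_sub' P Q) (norm_sub_le P Q)
  have hX : 0 ≤ φ' (1 + ‖P‖ + ‖Q‖) / (1 + ‖P‖ + ‖Q‖) * ‖P - Q‖ ^ 2 :=
    mul_nonneg (div_nonneg (h.deriv_nonneg (by positivity)) (by positivity)) (sq_nonneg _)
  have hZ := h.shifted_nonneg (by positivity : (0 : ℝ) < 1 + ‖Q‖) (norm_nonneg (P - Q))
  exact ⟨hV.mono (le_mul_of_one_le_right (by linarith) hcS) hX (sq_nonneg _),
    hV.symm.trans hS (by linarith) (by linarith),
    hS.mono (le_mul_of_one_le_left (by linarith) hcV) hX hZ⟩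

/-- For an N-function `φ` with index condition `p ≤ s·φ''(s)/φ'(s)+1 ≤ q` (`1 < p ≤ q`),
the quantities `(φ'(1+|P|+|Q|)/(1+|P|+|Q|))·|P−Q|²`, `|V_φ(P) − V_φ(Q)|²` and
`φ_{1+|Q|}(|P−Q|)` are pairwise comparable, uniformly in `P, Q ∈ ℝ^{N×n}`. -/
theorem V_equivalences (N n : ℕ) (p q : ℝ) (φ φ' φ'' : ℝ → ℝ)
    (hp : 1 < p) (hpq : p ≤ q) (h : IsNFun φ φ' φ'' p q) :
    ∃ c : ℝ, 1 ≤ c ∧ ∀ P Q : EuclideanSpace ℝ (Fin N × Fin n),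
      Comp c (φ' (1 + ‖P‖ + ‖Q‖) / (1 + ‖P‖ + ‖Q‖) * ‖P - Q‖ ^ 2)
        (‖Vfun φ' P - Vfun φ' Q‖ ^ 2) ∧
      Comp c (‖Vfun φ' P - Vfun φ' Q‖ ^ 2) (shifted φ' (1 + ‖Q‖) ‖P - Q‖) ∧
      Comp c (φ' (1 + ‖P‖ + ‖Q‖) / (1 + ‖P‖ + ‖Q‖) * ‖P - Q‖ ^ 2)
        (shifted φ' (1 + ‖Q‖) ‖P - Q‖) :=
  V_equivalences_general N n p q φ φ' φ'' h
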